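/- (Difference equation for q-Bernoulli polynomials.) For every integer n ≥ 1 and all x ∈ ℂ: B_{n,q}(x,1) − B_{n,q}(x) = ((−1;q)_{n−1}/2^{n−1}) [n]_q x^{n−1}. -/

import Mathlib

/-!
Since `𝓔_q(0) = 1`, the generating series of `B(x,1) - B(x,0)` satisfies
`(Σ (B_{n,q}(x,1) - B_{n,q}(x)) tⁿ/[n]_q!) (𝓔_q(t) - 1) = t 𝓔_q(tx) (𝓔_q(t) - 1)`.
The factor `𝓔_q(t) - 1` starts with `t` and so can be cancelled in the domain `ℂ⟦t⟧`; comparing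
the coefficients of `tⁿ` in the remaining identity, with `[n]_q! = [n]_q [n-1]_q!`, gives the formula.
For `‖q‖ < 1` no `[n]_q!` vanishes, so coefficients can be compared.
-/

open Finset PowerSeries

/-- The `q`-number `[n]_q = (1 - q^n)/(1 - q)`. -/
noncomputable def qNum (q : ℂ) (n : ℕ) : ℂ := (1 - q ^ n) / (1 - q)

/-- The `q`-factorial `[n]_q!`. -/
noncomputable def qFact (q : ℂ) : ℕ → ℂ
  | 0 => 1
  | n + 1 => qNum q (n + 1) * qFact q n

/-- The `q`-shifted factorial `(a; q)_n = ∏_{j=0}^{n-1} (1 - q^j a)`. -/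
noncomputable def qShift (a q : ℂ) (n : ℕ) : ℂ := ∏ j ∈ Finset.range n, (1 - q ^ j * a)

/-- The Gaussian binomial coefficient `[n choose k]_q = (q;q)_n / ((q;q)_{n-k} (q;q)_k)`. -/
noncomputable def qBinom (q : ℂ) (n k : ℕ) : ℂ :=
  qShift q q n / (qShift q q (n - k) * qShift q q k)

/-- The formal power series (in `t`) `𝓔_q(tx) = Σ_{n≥0} (-1;q)_n (x)^n t^n / (2^n [n]_q!)`. -/
noncomputable def qExp (q x : ℂ) : PowerSeries ℂ :=
  PowerSeries.mk fun n => qShift (-1) q n * x ^ n / (2 ^ n * qFact q n)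

/-- The generating series `Σ_{n≥0} a_n t^n / [n]_q!` of a sequence `a`. -/
noncomputable def qGen (q : ℂ) (a : ℕ → ℂ) : PowerSeries ℂ :=
  PowerSeries.mk fun n => a n / qFact q n

/-- The `q`-addition `(x ⊕_q y)^n`. -/
noncomputable def qAdd (q x y : ℂ) (n : ℕ) : ℂ :=
  ∑ k ∈ Finset.range (n + 1),
    qBinom q n k * (qShift (-1) q k * qShift (-1) q (n - k) / 2 ^ n) * x ^ k * y ^ (n - k)

lemma qExp_zero (q : ℂ) : qExp q 0 = 1 := by
  ext n
  cases n <;> simp [qExp, qShift, qFact]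

section

variable {q : ℂ}

lemma qNum_one (hq : q ≠ 1) : qNum q 1 = 1 := by
  simp [qNum, sub_ne_zero.mpr hq.symm]

lemma qNum_ne_zero (hq : ‖q‖ < 1) {n : ℕ} (hn : n ≠ 0) : qNum q n ≠ 0 := by
  have hq_pow : q ^ n ≠ 1 := fun h => by
    simpa [h] using (norm_pow q n ▸ pow_lt_one₀ (norm_nonneg q) hq hn : ‖q ^ n‖ < 1)
  have hq_one : q ≠ 1 := by rintro rfl; simp at hq
  exact div_ne_zero (sub_ne_zero.mpr hq_pow.symm) (sub_ne_zero.mpr hq_one.symm)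

lemma qFact_ne_zero (hq : ‖q‖ < 1) (n : ℕ) : qFact q n ≠ 0 := by
  induction n with
  | zero => simp [qFact]
  | succ m ih => exact mul_ne_zero (qNum_ne_zero hq m.succ_ne_zero) ih

lemma qExp_one_sub_one_ne_zero (hq : q ≠ 1) : qExp q 1 - 1 ≠ 0 := by
  intro h
  have h1 := congrArg (coeff 1) h
  simp [qExp, qFact, qShift, qNum_one hq] at h1

lemma qGen_sub (a b : ℕ → ℂ) : qGen q a - qGen q b = qGen q (a - b) := by
  ext n
  simp [qGen, sub_div]

lemma qGen_injective (hq : ‖q‖ < 1) : Function.Injective (qGen q) := by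
  intro a b h
  funext n
  have hn := congrArg (coeff n) h
  simpa [qGen, div_left_inj' (qFact_ne_zero hq n)] using hn

lemma X_mul_qExp (hq : ‖q‖ < 1) (x : ℂ) :
    X * qExp q x = qGen q fun n =>
      if n = 0 then 0 else qShift (-1) q (n - 1) / 2 ^ (n - 1) * qNum q n * x ^ (n - 1) := by
  ext n
  rcases n with _ | m
  · simp [qGen]
  · have hqNum := qNum_ne_zero hq m.succ_ne_zero
    have hqFact := qFact_ne_zero hq m
    simp only [coeff_succ_X_mul, qExp, qGen, coeff_mk, qFact, Nat.succ_ne_zero, if_false,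
      Nat.add_sub_cancel]
    field_simp

end

theorem qBernoulli_difference_general (q : ℂ) (hq1 : ‖q‖ < 1)
    (B : ℂ → ℂ → ℕ → ℂ)
    (hB : ∀ x y : ℂ, qGen q (B x y) * (qExp q 1 - 1) = PowerSeries.X * qExp q x * qExp q y)
    (n : ℕ) (hn : 1 ≤ n) (x : ℂ) :
    B x 1 n - B x 0 n = qShift (-1) q (n - 1) / 2 ^ (n - 1) * qNum q n * x ^ (n - 1) := by
  have hq : q ≠ 1 := by rintro rfl; simp at hq1
  have hdiff : qGen q (B x 1 - B x 0) = X * qExp q x := by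
    refine mul_right_cancel₀ (qExp_one_sub_one_ne_zero hq) ?_
    rw [← qGen_sub, sub_mul, hB, hB, qExp_zero]
    ring
  have hcoeff := congrFun (qGen_injective hq1 (hdiff.trans (X_mul_qExp hq1 x))) n
  simpa [Nat.one_le_iff_ne_zero.mp hn] using hcoeff

/-- Difference equation for the `q`-Bernoulli polynomials:
`B_{n,q}(x,1) - B_{n,q}(x) = ((-1;q)_{n-1}/2^{n-1}) [n]_q x^{n-1}` for `n ≥ 1`. -/
theorem qBernoulli_difference (q : ℂ) (hq0 : 0 < ‖q‖) (hq1 : ‖q‖ < 1)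
    (B : ℂ → ℂ → ℕ → ℂ)
    (hB : ∀ x y : ℂ, qGen q (B x y) * (qExp q 1 - 1) = PowerSeries.X * qExp q x * qExp q y)
    (n : ℕ) (hn : 1 ≤ n) (x : ℂ) :
    B x 1 n - B x 0 n = qShift (-1) q (n - 1) / 2 ^ (n - 1) * qNum q n * x ^ (n - 1) :=
  qBernoulli_difference_general q hq1 B hB n hn x
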